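/- Let W = ℝ^n with its standard inner product, n ≥ 2. Let R^{2,1} ⊆ W^* ⊗ Λ²W^* denote the kernel of complete antisymmetrization, i.e. the space of trilinear maps c : W × W × W → ℝ that are antisymmetric in the last two arguments and satisfy the cyclic identity c(w₁, w₂, w₃) + c(w₂, w₃, w₁) + c(w₃, w₁, w₂) = 0. Then: (1) dim R^{2,1} = (n³ − n)/3; (2) for each γ ∈ W^* the map c_γ(w, w₁, w₂) := γ(w₁)⟨w₂, w⟩ − γ(w₂)⟨w₁, w⟩ belongs to R^{2,1}, and γ ↦ c_γ is an injective linear map W^* → R^{2,1}; (3) the quotient R^{2,1}/{c_γ : γ ∈ W^*} has dimension (n³ − 4n)/3. -/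

import Mathlib

open Module Matrix

/-- The space `R^{2,1} ⊆ W^* ⊗ Λ²W^*`: trilinear forms on `W = ℝ^n` that are antisymmetric
in the last two arguments and have vanishing complete antisymmetrization (cyclic identity). -/
noncomputable def R21 (n : ℕ) :
    Submodule ℝ (MultilinearMap ℝ (fun _ : Fin 3 => (Fin n → ℝ)) ℝ) where
  carrier := {c | (∀ w w₁ w₂, c ![w, w₁, w₂] = - c ![w, w₂, w₁]) ∧
      ∀ w₁ w₂ w₃, c ![w₁, w₂, w₃] + c ![w₂, w₃, w₁] + c ![w₃, w₁, w₂] = 0}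
  add_mem' := by
    rintro a b ⟨ha₁, ha₂⟩ ⟨hb₁, hb₂⟩
    refine ⟨fun w w₁ w₂ => ?_, fun w₁ w₂ w₃ => ?_⟩ <;> simp only [MultilinearMap.add_apply]
    · linear_combination ha₁ w w₁ w₂ + hb₁ w w₁ w₂
    · linear_combination ha₂ w₁ w₂ w₃ + hb₂ w₁ w₂ w₃
  zero_mem' := by
    refine ⟨fun w w₁ w₂ => ?_, fun w₁ w₂ w₃ => ?_⟩ <;> simp
  smul_mem' := by
    rintro t a ⟨ha₁, ha₂⟩
    refine ⟨fun w w₁ w₂ => ?_, fun w₁ w₂ w₃ => ?_⟩ <;>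
      simp only [MultilinearMap.smul_apply, smul_eq_mul]
    · linear_combination t * ha₁ w w₁ w₂
    · linear_combination t * ha₂ w₁ w₂ w₃

/-! `R^{2,1}` is the image of an explicit idempotent `P` on trilinear forms (the projection onto
the hook component), so its dimension is `tr P`, which in the basis of monomial forms
`x_i y_j z_k` is `(n³ - n)/3`. The forms `c_γ` satisfy both defining identities, and for `k ≠ j`
one reads off `c_γ(e_k, e_j, e_k) = γ(e_j)`, so `γ ↦ c_γ` is injective once `n ≥ 2`; the
dimension of the quotient is then `(n³ - n)/3 - n`. -/

abbrev TrilinearForm (n : ℕ) := MultilinearMap ℝ (fun _ : Fin 3 => Fin n → ℝ) ℝ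

namespace TrilinearForm

variable {n : ℕ}

theorem ext_vec3 {f g : TrilinearForm n} (h : ∀ u v w, f ![u, v, w] = g ![u, v, w]) : f = g :=
  MultilinearMap.ext fun v => by rw [← FinVec.etaExpand_eq v]; exact h _ _ _

noncomputable def permute (σ : Equiv.Perm (Fin 3)) : TrilinearForm n →ₗ[ℝ] TrilinearForm n :=
  (MultilinearMap.domDomCongrLinearEquiv ℝ ℝ (Fin n → ℝ) ℝ σ).toLinearMap

theorem permute_apply (σ : Equiv.Perm (Fin 3)) (c : TrilinearForm n)
    (v : Fin 3 → Fin n → ℝ) :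
    permute σ c v = c ![v (σ 0), v (σ 1), v (σ 2)] :=
  congrArg c (FinVec.etaExpand_eq (v ∘ σ)).symm

/-- `A - Alt`, where `A` antisymmetrizes the last two arguments and `Alt` is the complete
antisymmetrization. Since `Alt ∘ A = Alt = A ∘ Alt`, this is a projection onto
`im A ∩ ker Alt`. -/
noncomputable def hookProj : TrilinearForm n →ₗ[ℝ] TrilinearForm n :=
  (1 / 3 : ℝ) • (LinearMap.id - permute (Equiv.swap 1 2))
    - (1 / 6 : ℝ) • (permute (finRotate 3) + permute (finRotate 3).symm)
    + (1 / 6 : ℝ) • (permute (Equiv.swap 0 1) + permute (Equiv.swap 0 2))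

theorem hookProj_apply (c : TrilinearForm n) (u v w : Fin n → ℝ) :
    hookProj c ![u, v, w] = (1 / 3) * c ![u, v, w] - (1 / 3) * c ![u, w, v]
      - (1 / 6) * c ![v, w, u] - (1 / 6) * c ![w, u, v]
      + (1 / 6) * c ![v, u, w] + (1 / 6) * c ![w, v, u] := by
  simp only [hookProj, LinearMap.add_apply, LinearMap.sub_apply, LinearMap.smul_apply,
    LinearMap.id_apply, _root_.add_apply, _root_.sub_apply, _root_.smul_apply, permute_apply,
    smul_eq_mul, Equiv.swap_apply_left, Equiv.swap_apply_right, Equiv.swap_apply_def,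
    finRotate_apply, finRotate_symm_apply, Fin.isValue, Fin.reduceEq, Fin.reduceAdd,
    Fin.reduceSub, reduceIte, zero_add, zero_sub, sub_self, cons_val_zero, cons_val_one, cons_val]
  ring

noncomputable def elementary (x : Fin n × Fin n × Fin n) : TrilinearForm n :=
  (MultilinearMap.mkPiAlgebra ℝ (Fin 3) ℝ).compLinearMap
    ![LinearMap.proj x.1, LinearMap.proj x.2.1, LinearMap.proj x.2.2]

theorem elementary_apply_single (x : Fin n × Fin n × Fin n) (i j k : Fin n) :
    elementary x ![Pi.single i 1, Pi.single j 1, Pi.single k 1]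
      = if x = (i, j, k) then 1 else 0 := by
  simp only [elementary, MultilinearMap.compLinearMap_apply, MultilinearMap.mkPiAlgebra_apply,
    Fin.prod_univ_three, Fin.isValue, cons_val_zero, cons_val_one, cons_val, LinearMap.coe_proj,
    Function.eval, Pi.single_apply, Prod.ext_iff]
  grind

noncomputable def coords : TrilinearForm n →ₗ[ℝ] (Fin n × Fin n × Fin n → ℝ) where
  toFun c x := c ![Pi.single x.1 1, Pi.single x.2.1 1, Pi.single x.2.2 1]
  map_add' _ _ := rfl
  map_smul' _ _ := rfl

noncomputable def basis : Basis (Fin n × Fin n × Fin n) ℝ (TrilinearForm n) :=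
  .ofEquivFun <| LinearEquiv.ofLinearMap coords (Fintype.linearCombination ℝ elementary)
    (by
      ext x ⟨i, j, k⟩
      simp [coords, Fintype.linearCombination_apply, elementary_apply_single, Pi.single_apply,
        eq_comm])
    (by
      refine LinearMap.ext fun c =>
        Basis.ext_multilinear (fun _ => Pi.basisFun ℝ (Fin n)) fun v => ?_
      have hv : (fun i => Pi.basisFun ℝ (Fin n) (v i))
          = ![Pi.single (v 0) 1, Pi.single (v 1) 1, Pi.single (v 2) 1] := by
        funext i; fin_cases i <;> simp
      simp only [hv, LinearMap.comp_apply, Fintype.linearCombination_apply, _root_.sum_apply,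
        _root_.smul_apply, elementary_apply_single]
      simp [coords, mul_ite])

theorem basis_apply (x : Fin n × Fin n × Fin n) : basis x = elementary x := by
  simp [basis, Fintype.linearCombination_apply, Pi.single_apply]

theorem basis_repr_apply (c : TrilinearForm n) (x : Fin n × Fin n × Fin n) :
    basis.repr c x = c ![Pi.single x.1 1, Pi.single x.2.1 1, Pi.single x.2.2 1] :=
  rfl

theorem basis_repr_hookProj_basis (i j k : Fin n) :
    basis.repr (hookProj (basis (i, j, k))) (i, j, k)
      = 1 / 3 - (1 / 3) * (if j = k then 1 else 0) - (1 / 3) * (if i = j ∧ j = k then 1 else 0)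
        + (1 / 6) * (if i = j then 1 else 0) + (1 / 6) * (if i = k then 1 else 0) := by
  simp only [basis_repr_apply, basis_apply, hookProj_apply, elementary_apply_single,
    Prod.mk.injEq]
  grind

theorem trace_hookProj : LinearMap.trace ℝ _ (hookProj (n := n)) = ((n : ℝ) ^ 3 - n) / 3 := by
  rw [LinearMap.trace_eq_matrix_trace ℝ basis, Matrix.trace]
  simp only [Matrix.diag_apply, LinearMap.toMatrix_apply, Fintype.sum_prod_type,
    basis_repr_hookProj_basis, mul_ite, mul_one, mul_zero, ite_and, Finset.sum_add_distrib,
    Finset.sum_sub_distrib, Finset.sum_const, Finset.card_univ, Fintype.card_fin, nsmul_eq_mul,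
    Finset.sum_ite_eq, Finset.mem_univ, reduceIte, Finset.sum_ite_irrel]
  ring

noncomputable def ofDual (γ : (Fin n → ℝ) →ₗ[ℝ] ℝ) : TrilinearForm n :=
  ∑ k : Fin n, ((MultilinearMap.mkPiAlgebra ℝ (Fin 3) ℝ).compLinearMap
      ![LinearMap.proj k, γ, LinearMap.proj k] -
    (MultilinearMap.mkPiAlgebra ℝ (Fin 3) ℝ).compLinearMap
      ![LinearMap.proj k, LinearMap.proj k, γ])

theorem ofDual_apply (γ : (Fin n → ℝ) →ₗ[ℝ] ℝ) (w w₁ w₂ : Fin n → ℝ) :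
    ofDual γ ![w, w₁, w₂] = γ w₁ * (w₂ ⬝ᵥ w) - γ w₂ * (w₁ ⬝ᵥ w) := by
  simp only [ofDual, _root_.sum_apply, _root_.sub_apply, MultilinearMap.compLinearMap_apply,
    MultilinearMap.mkPiAlgebra_apply, Fin.prod_univ_three, Finset.sum_sub_distrib, dotProduct,
    Finset.mul_sum, cons_val_zero, cons_val_one, cons_val_two, head_cons, tail_cons,
    LinearMap.proj_apply]
  congr 1 <;> exact Finset.sum_congr rfl fun k _ => by ring

theorem ofDual_eq_zero (hn : 2 ≤ n) {γ : (Fin n → ℝ) →ₗ[ℝ] ℝ} (hγ : ofDual γ = 0) :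
    γ = 0 := by
  refine (Pi.basisFun ℝ (Fin n)).ext fun j => ?_
  obtain ⟨k, hkj⟩ := Fintype.exists_ne_of_one_lt_card (by rwa [Fintype.card_fin]) j
  have h := congrArg (· ![Pi.single k 1, Pi.single j 1, Pi.single k 1]) hγ
  simpa [ofDual_apply, hkj] using h

end TrilinearForm

namespace R21

open TrilinearForm

variable {n : ℕ}

theorem hookProj_mem (c : TrilinearForm n) : hookProj c ∈ R21 n :=
  ⟨fun u v w => by simp only [hookProj_apply]; ring,
    fun u v w => by simp only [hookProj_apply]; ring⟩

theorem hookProj_eq_self {c : TrilinearForm n} (hc : c ∈ R21 n) : hookProj c = c := by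
  obtain ⟨hanti, hcyc⟩ := hc
  refine ext_vec3 fun u v w => ?_
  rw [hookProj_apply]
  linarith [hanti u v w, hanti v u w, hanti w v u, hcyc u v w]

theorem isProj_hookProj : LinearMap.IsProj (R21 n) (hookProj (n := n)) :=
  ⟨hookProj_mem, fun _ => hookProj_eq_self⟩

theorem three_mul_finrank : 3 * finrank ℝ (R21 n) = n ^ 3 - n := by
  have := Module.Free.of_divisionRing ℝ (R21 n)
  have := Module.Free.of_divisionRing ℝ (LinearMap.ker (hookProj (n := n)))
  have htrace := (isProj_hookProj (n := n)).trace
  rw [trace_hookProj] at htrace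
  have hle : n ≤ n ^ 3 := Nat.le_self_pow (by norm_num) n
  have h : ((3 * finrank ℝ (R21 n) : ℕ) : ℝ) = ((n ^ 3 - n : ℕ) : ℝ) := by
    push_cast [Nat.cast_sub hle, ← htrace]
    ring
  exact_mod_cast h

theorem ofDual_mem (γ : (Fin n → ℝ) →ₗ[ℝ] ℝ) : TrilinearForm.ofDual γ ∈ R21 n := by
  refine ⟨fun w w₁ w₂ => ?_, fun w₁ w₂ w₃ => ?_⟩ <;> simp only [ofDual_apply]
  · ring
  · linear_combination γ w₂ * dotProduct_comm w₃ w₁ + γ w₃ * dotProduct_comm w₁ w₂ +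
      γ w₁ * dotProduct_comm w₂ w₃

noncomputable def ofDual : ((Fin n → ℝ) →ₗ[ℝ] ℝ) →ₗ[ℝ] R21 n where
  toFun γ := ⟨TrilinearForm.ofDual γ, ofDual_mem γ⟩
  map_add' γ δ := Subtype.ext <| ext_vec3 fun w w₁ w₂ => by
    simp only [Submodule.coe_add, _root_.add_apply, ofDual_apply, LinearMap.add_apply]
    ring
  map_smul' t γ := Subtype.ext <| ext_vec3 fun w w₁ w₂ => by
    simp only [Submodule.coe_smul, _root_.smul_apply, ofDual_apply, LinearMap.smul_apply,
      RingHom.id_apply, smul_eq_mul]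
    ring

theorem ofDual_injective (hn : 2 ≤ n) : Function.Injective (ofDual (n := n)) :=
  (injective_iff_map_eq_zero _).2 fun _ hγ =>
    TrilinearForm.ofDual_eq_zero hn (congrArg Subtype.val hγ)

theorem finrank_range_ofDual (hn : 2 ≤ n) :
    finrank ℝ (LinearMap.range (ofDual (n := n))) = n := by
  rw [LinearMap.finrank_range_of_inj (ofDual_injective hn), Module.finrank_linearMap_self,
    Module.finrank_fin_fun]

end R21

theorem finrank_R21_and_quotient (n : ℕ) (hn : 2 ≤ n) :
    finrank ℝ ↥(R21 n) = (n ^ 3 - n) / 3 ∧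
    ∃ Φ : ((Fin n → ℝ) →ₗ[ℝ] ℝ) →ₗ[ℝ] ↥(R21 n),
      (∀ (γ : (Fin n → ℝ) →ₗ[ℝ] ℝ) (w w₁ w₂ : Fin n → ℝ),
        (↑(Φ γ) : MultilinearMap ℝ (fun _ : Fin 3 => (Fin n → ℝ)) ℝ) ![w, w₁, w₂]
          = γ w₁ * (w₂ ⬝ᵥ w) - γ w₂ * (w₁ ⬝ᵥ w)) ∧
      Function.Injective Φ ∧
      finrank ℝ (@HasQuotient.Quotient ↥(R21 n) (Submodule ℝ ↥(R21 n))
        (Submodule.hasQuotient (M := ↥(R21 n))) (LinearMap.range Φ)) = (n ^ 3 - 4 * n) / 3 := by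
  have hdim := R21.three_mul_finrank (n := n)
  have hquot := Submodule.finrank_quotient_add_finrank (M := R21 n) (LinearMap.range R21.ofDual)
  rw [R21.finrank_range_ofDual hn] at hquot
  have h4n : 4 * n ≤ n ^ 3 := by nlinarith [Nat.mul_le_mul hn hn]
  exact ⟨by omega, R21.ofDual, TrilinearForm.ofDual_apply, R21.ofDual_injective hn, by omega⟩
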